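/- Diagonal quasi-DEER recurrence is the exact Newton recurrence for diagonal dynamics: if Df(s_{t-1}) is a diagonal matrix with diagonal vector d_{t-1} for each t, then the Newton update Δ satisfies the componentwise recurrence Δ_{t,j} = d_{t-1,j} · Δ_{t-1,j} - r_{t,j}(s) for each coordinate j, requiring only elementwise products. -/

import Mathlib

/-!
The Newton matrix `J(s)` is block lower-bidiagonal with identity diagonal blocks, so row `t` of
`J(s) Δ = -r(s)` reads `Δ_t - Df(s_{t-1}) Δ_{t-1} = -r_t` (and `Δ_0 = -r_0`). When
`Df(s_{t-1}) = diag(d_t)`, the matrix-vector product is the elementwise product `d_t * Δ_{t-1}`.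
-/

open Matrix

noncomputable def Df (D : ℕ) (f : (Fin D → ℝ) → (Fin D → ℝ)) (x : Fin D → ℝ) :
    Matrix (Fin D) (Fin D) ℝ :=
  LinearMap.toMatrix' (fderiv ℝ f x).toLinearMap

noncomputable def Jmat (D T : ℕ) (f : (Fin D → ℝ) → (Fin D → ℝ))
    (s : Fin T → Fin D → ℝ) : Matrix (Fin T × Fin D) (Fin T × Fin D) ℝ :=
  fun p q =>
    if p.1 = q.1 then (if p.2 = q.2 then (1 : ℝ) else 0)
    else if (p.1 : ℕ) = (q.1 : ℕ) + 1 then -(Df D f (s q.1) p.2 q.2)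
    else 0

def resid (D T : ℕ) (f : (Fin D → ℝ) → (Fin D → ℝ)) (s0 : Fin D → ℝ)
    (s : Fin T → Fin D → ℝ) (t : Fin T) : Fin D → ℝ :=
  s t - f (if _h : (t : ℕ) = 0 then s0
           else s ⟨(t : ℕ) - 1, lt_of_le_of_lt (Nat.sub_le _ _) t.isLt⟩)

section

variable {D T : ℕ} (f : (Fin D → ℝ) → (Fin D → ℝ)) (s : Fin T → Fin D → ℝ)

theorem Jmat_apply (p q : Fin T × Fin D) :
    Jmat D T f s p q =
      (1 : Matrix (Fin T × Fin D) (Fin T × Fin D) ℝ) p q -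
        if (p.1 : ℕ) = q.1 + 1 then Df D f (s q.1) p.2 q.2 else 0 := by
  simp only [Jmat, Matrix.one_apply, Prod.ext_iff]
  split_ifs <;> simp_all

theorem Jmat_mulVec_apply (Δ : Fin T → Fin D → ℝ) (t : Fin T) (j : Fin D) :
    (Jmat D T f s *ᵥ fun p => Δ p.1 p.2) (t, j) =
      Δ t j - ∑ u : Fin T, if (t : ℕ) = u + 1 then (Df D f (s u) *ᵥ Δ u) j else 0 := by
  simp only [mulVec, dotProduct, Jmat_apply, sub_mul, Finset.sum_sub_distrib]
  congr 1
  · simp [Matrix.one_apply]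
  · rw [Fintype.sum_prod_type]
    refine Finset.sum_congr rfl fun u _ => ?_
    split_ifs <;> simp

theorem Jmat_mulVec_apply_of_eq_zero (Δ : Fin T → Fin D → ℝ) {t : Fin T} (ht : (t : ℕ) = 0)
    (j : Fin D) : (Jmat D T f s *ᵥ fun p => Δ p.1 p.2) (t, j) = Δ t j := by
  simp [Jmat_mulVec_apply, ht]

theorem Jmat_mulVec_apply_of_ne_zero (Δ : Fin T → Fin D → ℝ) {t : Fin T} (ht : (t : ℕ) ≠ 0)
    (j : Fin D) :
    (Jmat D T f s *ᵥ fun p => Δ p.1 p.2) (t, j) =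
      Δ t j - (Df D f (s ⟨(t : ℕ) - 1, lt_of_le_of_lt (Nat.sub_le _ _) t.isLt⟩) *ᵥ
        Δ ⟨(t : ℕ) - 1, lt_of_le_of_lt (Nat.sub_le _ _) t.isLt⟩) j := by
  have hprev : ∀ u : Fin T, (t : ℕ) = u + 1 ↔
      u = ⟨(t : ℕ) - 1, lt_of_le_of_lt (Nat.sub_le _ _) t.isLt⟩ := fun u => by
    rw [Fin.ext_iff]
    dsimp only
    omega
  simp only [Jmat_mulVec_apply, hprev, Finset.sum_ite_eq', Finset.mem_univ, if_true]

end

theorem diagonal_quasi_deer_exact_general (D T : ℕ) (f : (Fin D → ℝ) → (Fin D → ℝ))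
    (s0 : Fin D → ℝ) (s : Fin T → Fin D → ℝ)
    (d : Fin T → Fin D → ℝ)
    (hdiag : ∀ t : Fin T, (t : ℕ) ≠ 0 →
      Df D f (s ⟨(t : ℕ) - 1, lt_of_le_of_lt (Nat.sub_le _ _) t.isLt⟩) =
        Matrix.diagonal (d t))
    (Δ : Fin T → Fin D → ℝ)
    (hΔ : (Jmat D T f s) *ᵥ (fun p : Fin T × Fin D => Δ p.1 p.2) =
      fun p : Fin T × Fin D => -(resid D T f s0 s p.1 p.2)) :
    (∀ t : Fin T, (t : ℕ) = 0 → Δ t = -(resid D T f s0 s t)) ∧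
    (∀ t : Fin T, (t : ℕ) ≠ 0 → ∀ j : Fin D,
      Δ t j =
        d t j * Δ ⟨(t : ℕ) - 1, lt_of_le_of_lt (Nat.sub_le _ _) t.isLt⟩ j -
          resid D T f s0 s t j) := by
  constructor
  · intro t ht
    funext j
    simpa [Jmat_mulVec_apply_of_eq_zero f s Δ ht] using congrFun hΔ (t, j)
  · intro t ht j
    have row := congrFun hΔ (t, j)
    rw [Jmat_mulVec_apply_of_ne_zero f s Δ ht, hdiag t ht, mulVec_diagonal] at row
    linarith

/-- if the dynamics Jacobians are diagonal, `Df(s_{t-1}) = diag(d_t)`, then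
the Newton update `Δ` (solving `J(s)Δ = -r(s)`) satisfies the componentwise recurrence
`Δ_{t,j} = d_{t,j} Δ_{t-1,j} - r_{t,j}`, requiring only elementwise products. -/
theorem diagonal_quasi_deer_exact (D T : ℕ) (f : (Fin D → ℝ) → (Fin D → ℝ))
    (hf : Differentiable ℝ f) (s0 : Fin D → ℝ) (s : Fin T → Fin D → ℝ)
    (d : Fin T → Fin D → ℝ)
    (hdiag : ∀ t : Fin T, (t : ℕ) ≠ 0 →
      Df D f (s ⟨(t : ℕ) - 1, lt_of_le_of_lt (Nat.sub_le _ _) t.isLt⟩) =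
        Matrix.diagonal (d t))
    (Δ : Fin T → Fin D → ℝ)
    (hΔ : (Jmat D T f s) *ᵥ (fun p : Fin T × Fin D => Δ p.1 p.2) =
      fun p : Fin T × Fin D => -(resid D T f s0 s p.1 p.2)) :
    (∀ t : Fin T, (t : ℕ) = 0 → Δ t = -(resid D T f s0 s t)) ∧
    (∀ t : Fin T, (t : ℕ) ≠ 0 → ∀ j : Fin D,
      Δ t j =
        d t j * Δ ⟨(t : ℕ) - 1, lt_of_le_of_lt (Nat.sub_le _ _) t.isLt⟩ j -
          resid D T f s0 s t j) :=
  diagonal_quasi_deer_exact_general D T f s0 s d hdiag Δ hΔ
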